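/- Let f : E × E → ℝ be differentiable with gradient Lipschitz with constant L_f. For iterates V, V⁺, U, U⁻, U⁺ and extrapolated points V̄⁺ = V⁺ + α(V⁺ − V), Ū = U + β(U − U⁻), the quantity R := f(V̄⁺, U) − f(V⁺, Ū) + f(V, Ū) − f(V, U) + f(V⁺, U⁺) − f(V̄⁺, U⁺) satisfies R ≤ 2α²L_f‖V⁺ − V‖² + αL_f‖V⁺ − V‖·‖U⁺ − U‖ + βL_f‖V⁺ − V‖·‖U − U⁻‖ + 2β²L_f‖U − U⁻‖². -/

import Mathlib

open scoped NNReal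

section MixedDifference

variable {F G : Type*} [NormedAddCommGroup F] [NormedSpace ℝ F]
  [NormedAddCommGroup G] [NormedSpace ℝ G] {g : F → G} {K : ℝ≥0}

theorem lipschitzWith_sub_comp_add_const_of_lipschitzWith_fderiv (hg : Differentiable ℝ g)
    (hlip : LipschitzWith K (fderiv ℝ g)) (h : F) :
    LipschitzWith (K * ‖h‖₊) (fun z => g (z + h) - g z) := by
  have hderiv : ∀ z, HasFDerivAt (fun z => g (z + h) - g z)
      (fderiv ℝ g (z + h) - fderiv ℝ g z) z := fun z =>
    ((hasFDerivAt_comp_add_right h).2 (hg (z + h)).hasFDerivAt).sub (hg z).hasFDerivAt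
  refine lipschitzWith_of_nnnorm_fderiv_le (fun z => (hderiv z).differentiableAt) fun z => ?_
  rw [(hderiv z).fderiv]
  simpa only [edist_nndist, nndist_eq_nnnorm, add_sub_cancel_left, ← ENNReal.coe_mul,
    ENNReal.coe_le_coe] using hlip.edist_le_mul (z + h) z

theorem norm_sub_sub_sub_le_of_lipschitzWith_fderiv (hg : Differentiable ℝ g)
    (hlip : LipschitzWith K (fderiv ℝ g)) (x y h : F) :
    ‖g (x + h) - g x - (g (y + h) - g y)‖ ≤ K * ‖h‖ * ‖x - y‖ :=
  (lipschitzWith_sub_comp_add_const_of_lipschitzWith_fderiv hg hlip h).norm_sub_le x y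

end MixedDifference

theorem extrapolation_error_bound_general
    {E : Type*} [NormedAddCommGroup E] [InnerProductSpace ℝ E]
    (f : E × E → ℝ) (Lf : ℝ) (hLf : 0 ≤ Lf)
    (hdiff : Differentiable ℝ f)
    (hlip : LipschitzWith (Real.toNNReal Lf) (fderiv ℝ f))
    (α β : ℝ) (hα : 0 ≤ α) (hβ : 0 ≤ β)
    (V Vp U Um Up : E) :
    f (Vp + α • (Vp - V), U) - f (Vp, U + β • (U - Um)) +
        f (V, U + β • (U - Um)) - f (V, U) +
        f (Vp, Up) - f (Vp + α • (Vp - V), Up) ≤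
      2 * α ^ 2 * Lf * ‖Vp - V‖ ^ 2 + α * Lf * ‖Vp - V‖ * ‖Up - U‖ +
        β * Lf * ‖Vp - V‖ * ‖U - Um‖ + 2 * β ^ 2 * Lf * ‖U - Um‖ ^ 2 := by
  have mixed (x y h : E × E) : f (x + h) - f x - (f (y + h) - f y) ≤ Lf * ‖h‖ * ‖x - y‖ := by
    simpa only [Real.coe_toNNReal _ hLf] using (le_abs_self _).trans
      (norm_sub_sub_sub_le_of_lipschitzWith_fderiv hdiff hlip x y h)
  -- `R` splits into a mixed difference in the `V`-step at rows `U`, `Up` and one in the `U`-step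
  -- at columns `Vp`, `V`; the quadratic terms of the bound are slack.
  have hV := mixed (Vp, U) (Vp, Up) (α • (Vp - V), 0)
  have hU := mixed (Vp, U + β • (U - Um)) (V, U + β • (U - Um)) (0, -(β • (U - Um)))
  simp only [Prod.mk_add_mk, Prod.mk_sub_mk, add_zero, sub_self, add_neg_cancel_right,
    Prod.norm_mk, norm_zero, norm_neg, norm_smul, Real.norm_of_nonneg hα, Real.norm_of_nonneg hβ,
    norm_sub_rev U Up, max_eq_left, max_eq_right, norm_nonneg, mul_nonneg hα, mul_nonneg hβ] at hV hU
  have hα2 : 0 ≤ 2 * α ^ 2 * Lf * ‖Vp - V‖ ^ 2 := by positivity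
  have hβ2 : 0 ≤ 2 * β ^ 2 * Lf * ‖U - Um‖ ^ 2 := by positivity
  linarith

theorem extrapolation_error_bound
    {E : Type*} [NormedAddCommGroup E] [InnerProductSpace ℝ E] [FiniteDimensional ℝ E]
    (f : E × E → ℝ) (Lf : ℝ) (hLf : 0 ≤ Lf)
    (hdiff : Differentiable ℝ f)
    (hlip : LipschitzWith (Real.toNNReal Lf) (fderiv ℝ f))
    (α β : ℝ) (hα : 0 ≤ α) (hβ : 0 ≤ β)
    (V Vp U Um Up : E) :
    f (Vp + α • (Vp - V), U) - f (Vp, U + β • (U - Um)) +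
        f (V, U + β • (U - Um)) - f (V, U) +
        f (Vp, Up) - f (Vp + α • (Vp - V), Up) ≤
      2 * α ^ 2 * Lf * ‖Vp - V‖ ^ 2 + α * Lf * ‖Vp - V‖ * ‖Up - U‖ +
        β * Lf * ‖Vp - V‖ * ‖U - Um‖ + 2 * β ^ 2 * Lf * ‖U - Um‖ ^ 2 :=
  extrapolation_error_bound_general f Lf hLf hdiff hlip α β hα hβ V Vp U Um Up
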